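/- Let d ≥ 1 and let R be a Borel probability measure on C₁ with endpoint disintegration (R^{xy}). Let m be a Borel probability measure on ℝ^d × ℝ^d with m ≪ R₀₁, and define the glued measure m ⊗ R^· ∈ P(C₁) by (m ⊗ R^·)(A) := ∫ R^{xy}(A) m(d(x,y)) for Borel A ⊆ C₁. Then the endpoint marginal of m ⊗ R^· equals m, and H(m ⊗ R^· ‖ R) = H(m ‖ R₀₁). (The entropy identity underlying the reduction (2.2) of the dynamic to the static Schrödinger problem.) -/

import Mathlib

open MeasureTheory ProbabilityTheory Set
open scoped ENNReal NNReal Classical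

noncomputable section

abbrev Euc (d : ℕ) := EuclideanSpace ℝ (Fin d)

/-- `C₁ = C([0,1], ℝ^d)` with the supremum metric. -/
abbrev PathSp (d : ℕ) := C(Set.Icc (0:ℝ) 1, Euc d)

instance (d : ℕ) : MeasurableSpace (PathSp d) := borel _
instance (d : ℕ) : BorelSpace (PathSp d) := ⟨rfl⟩

/-- Evaluation of a path at time `0`. -/
def ev0 {d : ℕ} (φ : PathSp d) : Euc d := φ ⟨0, Set.left_mem_Icc.mpr zero_le_one⟩

/-- Evaluation of a path at time `1`. -/
def ev1 {d : ℕ} (φ : PathSp d) : Euc d := φ ⟨1, Set.right_mem_Icc.mpr zero_le_one⟩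

/-- The endpoint map `φ ↦ (φ(0), φ(1))`. -/
def ep {d : ℕ} (φ : PathSp d) : Euc d × Euc d := (ev0 φ, ev1 φ)

/-- Relative entropy `H(p‖q) := ∫ log(dp/dq) dp ∈ [0,∞]` if `p ≪ q`, and `+∞` otherwise
(the integral split into its positive and negative parts). -/
def relEntropy {α : Type*} [MeasurableSpace α] (p q : Measure α) : ℝ≥0∞ :=
  if p ≪ q then
    (∫⁻ a, ENNReal.ofReal (Real.log ((p.rnDeriv q a).toReal)) ∂p)
      - (∫⁻ a, ENNReal.ofReal (-Real.log ((p.rnDeriv q a).toReal)) ∂p)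
  else ⊤

/-- The set `Π^{C₁}(μ,ν)` of path-space couplings: probability measures on `C₁` with
time-`0` marginal `μ` and time-`1` marginal `ν`. -/
def PathCouplings (d : ℕ) (μ ν : Measure (Euc d)) : Set (Measure (PathSp d)) :=
  {π | IsProbabilityMeasure π ∧ π.map ev0 = μ ∧ π.map ev1 = ν}

/-!
Write `m = ρ · R₀₁` with `ρ = dm/dR₀₁`. Since `R^{xy}` lives on the fibre `{ep = (x,y)}`,
gluing `ρ · R₀₁` with `R^·` multiplies the path measure `R` by `ρ ∘ ep`, so
`m ⊗ R^· = (ρ ∘ ep) · R`. Pushing this forward by `ep` gives back `ρ · R₀₁ = m`, and the log-density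
`log ρ ∘ ep` integrated against `m ⊗ R^·` equals `log ρ` integrated against its image `m`.
-/

lemma measurable_ep {d : ℕ} : Measurable (ep (d := d)) :=
  ((continuous_eval_const _).prodMk (continuous_eval_const _)).measurable

section

variable {α β : Type*} [MeasurableSpace α] [MeasurableSpace β]

lemma relEntropy_eq_of_rnDeriv_ae_eq {p q : Measure α} (hpq : p ≪ q) {h : α → ℝ≥0∞}
    (hh : p.rnDeriv q =ᵐ[p] h) :
    relEntropy p q = (∫⁻ a, ENNReal.ofReal (Real.log (h a).toReal) ∂p)
      - ∫⁻ a, ENNReal.ofReal (-Real.log (h a).toReal) ∂p := by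
  rw [relEntropy, if_pos hpq]
  congr 1 <;> exact lintegral_congr_ae (hh.mono fun a ha => by simp only [ha])

lemma map_withDensity_comp {R : Measure α} {f : α → β} (hf : Measurable f) {ρ : β → ℝ≥0∞}
    (hρ : Measurable ρ) : (R.withDensity (ρ ∘ f)).map f = (R.map f).withDensity ρ := by
  ext s hs
  rw [Measure.map_apply hf hs, withDensity_apply _ (hf hs), withDensity_apply _ hs,
    setLIntegral_map hs hρ hf]
  rfl

lemma relEntropy_withDensity_comp {f : α → β} (R : Measure α) [SigmaFinite R]
    [SigmaFinite (R.map f)] (hf : Measurable f) {ρ : β → ℝ≥0∞} (hρ : Measurable ρ) :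
    relEntropy (R.withDensity (ρ ∘ f)) R = relEntropy ((R.map f).withDensity ρ) (R.map f) := by
  have hpull := relEntropy_eq_of_rnDeriv_ae_eq (withDensity_absolutelyContinuous R _)
    ((withDensity_absolutelyContinuous R _).ae_le (Measure.rnDeriv_withDensity R (hρ.comp hf)))
  have hpush := relEntropy_eq_of_rnDeriv_ae_eq (withDensity_absolutelyContinuous _ _)
    ((withDensity_absolutelyContinuous _ _).ae_le (Measure.rnDeriv_withDensity (R.map f) hρ))
  have hlog : Measurable fun b => Real.log (ρ b).toReal :=
    Real.measurable_log.comp (ENNReal.measurable_toReal.comp hρ)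
  have hlog_neg : Measurable fun b => -Real.log (ρ b).toReal := hlog.neg
  rw [hpull, hpush, ← map_withDensity_comp hf hρ,
    lintegral_map hlog.ennreal_ofReal hf, lintegral_map hlog_neg.ennreal_ofReal hf]
  rfl

lemma ae_eq_of_measure_fiber_eq_one [MeasurableSingletonClass β] {μ : Measure α}
    [IsProbabilityMeasure μ] {f : α → β} (hf : Measurable f) {z : β}
    (hz : μ {a | f a = z} = 1) : ∀ᵐ a ∂μ, f a = z := by
  have hmeas : MeasurableSet {a | f a = z} := hf (measurableSet_singleton z)
  rwa [ae_iff_measure_eq hmeas.nullMeasurableSet, measure_univ]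

lemma bind_withDensity_eq_withDensity_comp {ν : Measure β} (κ : Kernel β α) {f : α → β}
    (hf : Measurable f) (hfib : ∀ᵐ z ∂ν, ∀ᵐ a ∂κ z, f a = z) {ρ : β → ℝ≥0∞}
    (hρ : Measurable ρ) :
    (ν.withDensity ρ).bind κ = (ν.bind κ).withDensity (ρ ∘ f) := by
  ext A hA
  rw [Measure.bind_apply hA κ.measurable.aemeasurable, withDensity_apply _ hA,
    lintegral_withDensity_eq_lintegral_mul ν hρ (κ.measurable_coe hA),
    ← lintegral_indicator hA,
    Measure.lintegral_bind κ.measurable.aemeasurable ((hρ.comp hf).indicator hA).aemeasurable]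
  refine lintegral_congr_ae (hfib.mono fun z hz => ?_)
  calc ρ z * κ z A = ∫⁻ a, A.indicator (fun _ => ρ z) a ∂κ z := by
        rw [lintegral_indicator hA, setLIntegral_const, mul_comm]
    _ = ∫⁻ a, A.indicator (ρ ∘ f) a ∂κ z :=
        lintegral_congr_ae (hz.mono fun a ha => by simp [indicator, ha])

end

theorem glued_measure_entropy_identity_general
    {d : ℕ} (R : Measure (PathSp d)) [IsProbabilityMeasure R]
    (κ : Kernel (Euc d × Euc d) (PathSp d)) [IsMarkovKernel κ]
    (hfib : ∀ᵐ z ∂(R.map ep), (κ z) {φ : PathSp d | ep φ = z} = 1)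
    (hdis : R = (R.map ep).bind (fun z => κ z))
    (m : Measure (Euc d × Euc d)) [IsProbabilityMeasure m]
    (hac : m ≪ R.map ep) :
    (m.bind (fun z => κ z)).map ep = m ∧
    relEntropy (m.bind (fun z => κ z)) R = relEntropy m (R.map ep) := by
  set ρ := m.rnDeriv (R.map ep)
  have hρ : Measurable ρ := Measure.measurable_rnDeriv _ _
  have hm : (R.map ep).withDensity ρ = m := Measure.withDensity_rnDeriv_eq m _ hac
  have hglue : m.bind κ = R.withDensity (ρ ∘ ep) := by
    conv_lhs => rw [← hm]
    conv_rhs => rw [hdis]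
    exact bind_withDensity_eq_withDensity_comp κ measurable_ep
      (hfib.mono fun z hz => ae_eq_of_measure_fiber_eq_one measurable_ep hz) hρ
  rw [hglue, map_withDensity_comp measurable_ep hρ, relEntropy_withDensity_comp R measurable_ep hρ,
    hm]
  exact ⟨rfl, rfl⟩

/-- the entropy identity for glued measures: if `(R^{xy})` is the endpoint
disintegration of `R ∈ P(C₁)` (a Markov kernel `κ` with `R = R₀₁-glue of κ` and
`κ z` concentrated on the fiber over `z` for `R₀₁`-a.e. `z`), and `m ≪ R₀₁` is a
probability measure on `ℝ^d × ℝ^d`, then the glued measure `m ⊗ R^·` has endpoint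
marginal `m` and `H(m ⊗ R^· ‖ R) = H(m ‖ R₀₁)`. -/
theorem glued_measure_entropy_identity
    {d : ℕ} (hd : 1 ≤ d) (R : Measure (PathSp d)) [IsProbabilityMeasure R]
    (κ : Kernel (Euc d × Euc d) (PathSp d)) [IsMarkovKernel κ]
    (hfib : ∀ᵐ z ∂(R.map ep), (κ z) {φ : PathSp d | ep φ = z} = 1)
    (hdis : R = (R.map ep).bind (fun z => κ z))
    (m : Measure (Euc d × Euc d)) [IsProbabilityMeasure m]
    (hac : m ≪ R.map ep) :
    (m.bind (fun z => κ z)).map ep = m ∧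
    relEntropy (m.bind (fun z => κ z)) R = relEntropy m (R.map ep) :=
  glued_measure_entropy_identity_general R κ hfib hdis m hac

end
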